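/- arXiv:1606.06557 — 6 statements merged into one kernel-verified Lean document; each statement's English description precedes it below -/
import Mathlib

section
/- Let k ∈ ℕ and let G be a finite graph of tree width at most k that is k-improved and an atom. Then for every set S ⊆ V(G), the number of connected components of G − S is at most k · (|S| choose 2) + 1. -/
/-!
If `G − S` has a single component there is nothing to prove. Otherwise, for each component `C`
the vertices of `S` with a neighbour in `C` separate `C` from the other components, so, `G` being
an atom, they contain two non-adjacent vertices `u ≠ v`. Charging `C` to the pair `{u, v}`, all
components charged to one pair yield internally disjoint `u`–`v` paths (one through each
component), so by `k`-improvedness at most `k` components are charged to each of the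
`(|S| choose 2)` pairs.
-/

open SimpleGraph

section Defs

variable {V : Type*}

/-- There exist `m` pairwise internally disjoint `u`–`v` paths in `G`: `m` distinct paths
from `u` to `v` that pairwise share no vertices other than `u` and `v`. -/
def InternallyDisjointPaths (G : SimpleGraph V) (u v : V) (m : ℕ) : Prop :=
  ∃ P : Fin m → G.Path u v, Function.Injective P ∧
    ∀ i j, i ≠ j → ∀ x, x ∈ (P i).1.support → x ∈ (P j).1.support → x = u ∨ x = v

/-- `S` is a clique separator of `G`: `S` induces a clique and there are two vertices
outside `S` lying in different connected components of `G − S`. -/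
def SimpleGraph.IsCliqueSeparator (G : SimpleGraph V) (S : Set V) : Prop :=
  G.IsClique S ∧ ∃ v w : ↑(Sᶜ : Set V), ¬ (G.induce (Sᶜ : Set V)).Reachable v w

/-- An atom is a graph without clique separators. -/
def SimpleGraph.IsAtomGraph (G : SimpleGraph V) : Prop :=
  ∀ S : Set V, ¬ G.IsCliqueSeparator S

/-- `G` is `k`-improved: any two distinct vertices joined by `k + 1` pairwise internally
disjoint paths are adjacent. -/
def SimpleGraph.Improved (G : SimpleGraph V) (k : ℕ) : Prop :=
  ∀ u v : V, u ≠ v → InternallyDisjointPaths G u v (k + 1) → G.Adj u v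

/-- A tree decomposition of `G`: a finite tree together with bags such that for every vertex
the set of tree nodes whose bag contains it is nonempty and connected, and every edge of `G`
is covered by some bag. -/
structure SimpleGraph.TreeDecomp (G : SimpleGraph V) where
  T : Type
  finite : Finite T
  tree : SimpleGraph T
  isTree : tree.IsTree
  bag : T → Set V
  bag_connected : ∀ v : V, (tree.induce {t | v ∈ bag t}).Connected
  bag_cover : ∀ ⦃v w : V⦄, G.Adj v w → ∃ t, v ∈ bag t ∧ w ∈ bag t

/-- `G` has a tree decomposition of width at most `k`, i.e. all bags of size at most `k + 1`;
equivalently, the tree width of `G` is at most `k`. -/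
def SimpleGraph.HasTreeDecompWidthLE (G : SimpleGraph V) (k : ℕ) : Prop :=
  ∃ td : G.TreeDecomp, ∀ t, (td.bag t).ncard ≤ k + 1

/-- `G` is 3-connected: more than 3 vertices, and removing any at most 2 vertices leaves
a connected graph. -/
def SimpleGraph.ThreeConnected (G : SimpleGraph V) : Prop :=
  3 < Nat.card V ∧ ∀ S : Set V, S.ncard ≤ 2 → (G.induce (Sᶜ : Set V)).Connected

/-- `H` is a minor of `G`, witnessed by pairwise disjoint nonempty connected branch sets. -/
def SimpleGraph.HasMinor {W : Type*} (G : SimpleGraph V) (H : SimpleGraph W) : Prop :=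
  ∃ B : W → Set V,
    (∀ h, (B h).Nonempty) ∧
    (∀ h, (G.induce (B h)).Connected) ∧
    (∀ h h', h ≠ h' → Disjoint (B h) (B h')) ∧
    (∀ h h', H.Adj h h' → ∃ x ∈ B h, ∃ y ∈ B h', G.Adj x y)

end Defs

namespace SimpleGraph

variable {V : Type*} {G : SimpleGraph V} {S : Set V}

def AdjComponent (G : SimpleGraph V) {S : Set V} (s : V)
    (C : (G.induce Sᶜ).ConnectedComponent) : Prop :=
  ∃ x ∈ C.supp, G.Adj s x

lemma Reachable.mem_of_adj_closed {W : Type*} {H : SimpleGraph W} {X : Set W}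
    (hX : ∀ ⦃a b⦄, H.Adj a b → a ∈ X → b ∈ X) {a b : W} (h : H.Reachable a b) (ha : a ∈ X) :
    b ∈ X := by
  rw [reachable_iff_reflTransGen] at h
  induction h with
  | refl => exact ha
  | tail _ hbc ih => exact hX hbc ih

lemma ConnectedComponent.eq_of_mem_image_val_supp {s : Set V}
    {C C' : (G.induce s).ConnectedComponent} {z : V}
    (hz : z ∈ Subtype.val '' C.supp) (hz' : z ∈ Subtype.val '' C'.supp) : C = C' := by
  obtain ⟨y, hy, rfl⟩ := hz
  obtain ⟨y', hy', hyy'⟩ := hz'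
  rw [Subtype.val_injective hyy'] at hy'
  exact hy.symm.trans hy'

lemma exists_not_reachable_induce_compl_adjComponent {C C' : (G.induce Sᶜ).ConnectedComponent}
    (h : C ≠ C') :
    ∃ a b : ↥({s ∈ S | G.AdjComponent s C}ᶜ),
      ¬ (G.induce {s ∈ S | G.AdjComponent s C}ᶜ).Reachable a b := by
  set N := {s ∈ S | G.AdjComponent s C}
  obtain ⟨c, rfl⟩ := C.exists_rep
  obtain ⟨c', rfl⟩ := C'.exists_rep
  have hNS : N ⊆ S := fun s hs => hs.1
  let X : Set ↥Nᶜ := {a | ∃ ha : (a : V) ∉ S,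
    (G.induce Sᶜ).connectedComponentMk ⟨a, ha⟩ = (G.induce Sᶜ).connectedComponentMk c}
  have hX : ∀ ⦃a b⦄, (G.induce Nᶜ).Adj a b → a ∈ X → b ∈ X := by
    rintro a b hab ⟨ha, hac⟩
    by_cases hb : (b : V) ∈ S
    · exact absurd ⟨hb, ⟨a, ha⟩, hac, hab.symm⟩ b.2
    · refine ⟨hb, ?_⟩
      rw [← hac]
      exact ConnectedComponent.connectedComponentMk_eq_of_adj (G := G.induce Sᶜ)
        (v := ⟨b, hb⟩) (w := ⟨a, ha⟩) hab.symm
  refine ⟨⟨c, fun hc => c.2 (hNS hc)⟩, ⟨c', fun hc => c'.2 (hNS hc)⟩, fun hr => h ?_⟩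
  exact (hr.mem_of_adj_closed hX (show _ ∈ X from ⟨c.2, rfl⟩)).2.symm

lemma IsAtomGraph.exists_not_adj_adjComponent (hatom : G.IsAtomGraph)
    {C C' : (G.induce Sᶜ).ConnectedComponent} (h : C ≠ C') :
    ∃ u ∈ S, ∃ v ∈ S, u ≠ v ∧ ¬ G.Adj u v ∧ G.AdjComponent u C ∧ G.AdjComponent v C := by
  have hN : ¬ G.IsClique {s ∈ S | G.AdjComponent s C} := fun hcl =>
    hatom _ ⟨hcl, exists_not_reachable_induce_compl_adjComponent h⟩
  rw [isClique_iff, Set.Pairwise] at hN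
  push Not at hN
  obtain ⟨u, hu, v, hv, huv, hna⟩ := hN
  exact ⟨u, hu.1, v, hv.1, huv, hna, hu.2, hv.2⟩

lemma ConnectedComponent.exists_isPath_induce {s : Set V}
    {C : (G.induce s).ConnectedComponent} {x y : s} (hx : x ∈ C.supp) (hy : y ∈ C.supp) :
    ∃ p : G.Walk x y, p.IsPath ∧ ∀ z ∈ p.support, z ∈ Subtype.val '' C.supp := by
  classical
  obtain ⟨q, hq⟩ := (ConnectedComponent.exact (hx.trans hy.symm)).exists_isPath
  obtain ⟨p, hp, hsupp⟩ : ∃ p : G.Walk x y, p.IsPath ∧ p.support = q.support.map Subtype.val :=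
    ⟨q.map (Embedding.induce s).toHom, hq.map (Embedding.induce (G := G) s).injective,
      Walk.support_map _ _⟩
  refine ⟨p, hp, fun z hz => ?_⟩
  rw [hsupp, List.mem_map] at hz
  obtain ⟨z, hz, rfl⟩ := hz
  exact ⟨z, (ConnectedComponent.sound (q.takeUntil z hz).reachable).symm.trans hx, rfl⟩

lemma exists_path_through_component {C : (G.induce Sᶜ).ConnectedComponent} {u v : V}
    (hu : u ∈ S) (hv : v ∈ S) (huv : u ≠ v) (hCu : G.AdjComponent u C)
    (hCv : G.AdjComponent v C) :
    ∃ P : G.Path u v, (∃ z ∈ P.1.support, z ∈ Subtype.val '' C.supp) ∧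
      ∀ z ∈ P.1.support, z = u ∨ z = v ∨ z ∈ Subtype.val '' C.supp := by
  obtain ⟨x, hx, hux⟩ := hCu
  obtain ⟨y, hy, hvy⟩ := hCv
  obtain ⟨q, hq, hqC⟩ := ConnectedComponent.exists_isPath_induce hx hy
  have hPath : (Walk.cons hux (q.concat hvy.symm)).IsPath := by
    refine (hq.concat (fun h => Subtype.coe_image_subset _ _ (hqC v h) hv) _).cons ?_
    rw [Walk.support_concat, List.mem_append, List.mem_singleton]
    exact not_or.mpr ⟨fun h => Subtype.coe_image_subset _ _ (hqC u h) hu, huv⟩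
  refine ⟨⟨_, hPath⟩, ⟨x, ?_, hqC x q.start_mem_support⟩, fun z hz => ?_⟩
  · simp
  · simp only [Walk.support_cons, Walk.support_concat, List.mem_cons, List.mem_append,
      List.mem_nil_iff, or_false] at hz
    rcases hz with rfl | hz | rfl
    · exact .inl rfl
    · exact .inr (.inr (hqC z hz))
    · exact .inr (.inl rfl)

lemma internallyDisjointPaths_of_injective {u v : V} (hu : u ∈ S) (hv : v ∈ S) (huv : u ≠ v)
    {m : ℕ} {C : Fin m → (G.induce Sᶜ).ConnectedComponent} (hC : Function.Injective C)
    (hCu : ∀ i, G.AdjComponent u (C i)) (hCv : ∀ i, G.AdjComponent v (C i)) :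
    InternallyDisjointPaths G u v m := by
  choose P hPC hP using fun i => exists_path_through_component hu hv huv (hCu i) (hCv i)
  have hshared : ∀ i j, ∀ z ∈ (P i).1.support, z ∈ (P j).1.support → z ≠ u → z ≠ v → i = j := by
    intro i j z hzi hzj hzu hzv
    exact hC (ConnectedComponent.eq_of_mem_image_val_supp (((hP i z hzi).resolve_left hzu).resolve_left hzv)
      (((hP j z hzj).resolve_left hzu).resolve_left hzv))
  refine ⟨P, fun i j hij => ?_, fun i j hij z hzi hzj => ?_⟩
  · obtain ⟨z, hz, hzC⟩ := hPC i
    exact hshared i j z hz (hij ▸ hz) (fun h => Subtype.coe_image_subset _ _ hzC (h ▸ hu))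
      (fun h => Subtype.coe_image_subset _ _ hzC (h ▸ hv))
  · by_contra! h
    exact hij (hshared i j z hzi hzj h.1 h.2)

lemma Improved.card_le_of_adjComponent {k : ℕ} (himp : G.Improved k) {u v : V} (hu : u ∈ S)
    (hv : v ∈ S) (huv : u ≠ v) (hna : ¬ G.Adj u v) (F : Finset (G.induce Sᶜ).ConnectedComponent)
    (hF : ∀ C ∈ F, G.AdjComponent u C ∧ G.AdjComponent v C) : F.card ≤ k := by
  by_contra! hk
  let C : Fin (k + 1) → (G.induce Sᶜ).ConnectedComponent := fun i =>
    F.equivFin.symm (Fin.castLE hk i)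
  have hC : Function.Injective C := fun i j h =>
    Fin.castLE_injective hk (F.equivFin.symm.injective (Subtype.ext h))
  exact hna <| himp u v huv <| internallyDisjointPaths_of_injective hu hv huv hC
    (fun i => (hF _ (F.equivFin.symm _).2).1) (fun i => (hF _ (F.equivFin.symm _).2).2)

lemma Improved.card_connectedComponent_le [Finite V] {k : ℕ} (himp : G.Improved k)
    (hpair : ∀ C : (G.induce Sᶜ).ConnectedComponent, ∃ u ∈ S, ∃ v ∈ S,
      u ≠ v ∧ ¬ G.Adj u v ∧ G.AdjComponent u C ∧ G.AdjComponent v C) :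
    Nat.card (G.induce Sᶜ).ConnectedComponent ≤ k * S.ncard.choose 2 := by
  classical
  choose u hu v hv huv hna hCu hCv using hpair
  have : Fintype (G.induce Sᶜ).ConnectedComponent := Fintype.ofFinite _
  let f : (G.induce Sᶜ).ConnectedComponent → Finset V := fun C => {u C, v C}
  have hf : ∀ C, ∀ w ∈ f C, G.AdjComponent w C := by
    intro C w hw
    rcases Finset.mem_insert.mp hw with rfl | hw
    · exact hCu C
    rw [Finset.mem_singleton.mp hw]
    exact hCv C
  calc Nat.card (G.induce Sᶜ).ConnectedComponent
      = (Finset.univ : Finset (G.induce Sᶜ).ConnectedComponent).card := by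
        rw [Nat.card_eq_fintype_card, Finset.card_univ]
    _ ≤ k * (Finset.univ.image f).card := by
        refine Finset.card_le_mul_card_image _ k fun p hp => ?_
        obtain ⟨C₀, -, rfl⟩ := Finset.mem_image.mp hp
        refine himp.card_le_of_adjComponent (hu C₀) (hv C₀) (huv C₀) (hna C₀) _ fun C hC => ?_
        rw [Finset.mem_filter] at hC
        exact ⟨hf C _ (hC.2 ▸ Finset.mem_insert_self _ _),
          hf C _ (hC.2 ▸ Finset.mem_insert_of_mem (Finset.mem_singleton_self _))⟩
    _ ≤ k * (S.toFinite.toFinset.powersetCard 2).card := by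
        refine Nat.mul_le_mul_left k (Finset.card_le_card fun p hp => ?_)
        obtain ⟨C, -, rfl⟩ := Finset.mem_image.mp hp
        refine Finset.mem_powersetCard.mpr ⟨?_, Finset.card_pair (huv C)⟩
        exact Finset.insert_subset (S.toFinite.mem_toFinset.mpr (hu C))
          (Finset.singleton_subset_iff.mpr (S.toFinite.mem_toFinset.mpr (hv C)))
    _ = k * S.ncard.choose 2 := by
        rw [Finset.card_powersetCard, Set.ncard_eq_toFinset_card S]

end SimpleGraph

theorem tw_improved_atom_bounded_separability_general {V : Type} [Fintype V] (k : ℕ)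
    (G : SimpleGraph V) (himp : G.Improved k)
    (hatom : G.IsAtomGraph) (S : Set V) :
    Nat.card ((G.induce (Sᶜ : Set V)).ConnectedComponent) ≤ k * (S.ncard).choose 2 + 1 := by
  rcases le_or_gt (Nat.card (G.induce (Sᶜ : Set V)).ConnectedComponent) 1 with h | h
  · exact h.trans (Nat.le_add_left 1 _)
  have : Nontrivial (G.induce (Sᶜ : Set V)).ConnectedComponent :=
    Finite.one_lt_card_iff_nontrivial.mp h
  refine (himp.card_connectedComponent_le fun C => ?_).trans (Nat.le_succ _)
  obtain ⟨C', hC'⟩ := exists_ne C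
  exact hatom.exists_not_adj_adjComponent hC'.symm

/-- If `G` is a finite graph of tree width at most `k` that is `k`-improved and
an atom, then for every `S ⊆ V(G)` the number of connected components of `G − S` is at most
`k * (|S| choose 2) + 1`. -/
theorem tw_improved_atom_bounded_separability {V : Type} [Fintype V] (k : ℕ)
    (G : SimpleGraph V) (htw : G.HasTreeDecompWidthLE k) (himp : G.Improved k)
    (hatom : G.IsAtomGraph) (S : Set V) :
    Nat.card ((G.induce (Sᶜ : Set V)).ConnectedComponent) ≤ k * (S.ncard).choose 2 + 1 :=
  tw_improved_atom_bounded_separability_general k G himp hatom S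
end

section
/- Let ℓ ∈ ℕ and let G be a finite 3-connected graph that does not contain K_{3,ℓ} as a minor. Then for every set S ⊆ V(G), the number of connected components of G − S is at most max(1, ℓ · (|S| choose 3)). -/
open SimpleGraph

/-! If `G − S` has two components, the neighbours in `S` of either one separate it from the
other, so 3-connectivity gives every component at least three neighbours in `S`. With more than
`ℓ · (|S| choose 3)` components, pigeonhole yields three vertices of `S` that are common neighbours of
`ℓ` of the components; these components and the three singletons are the branch sets of a
`K_{3,ℓ}` minor. -/

theorem Finset.exists_card_eq_lt_card_filter_subset {ι α : Type*} [DecidableEq α]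
    {s : Finset α} {I : Finset ι} {f : ι → Finset α} {k ℓ : ℕ}
    (hfs : ∀ i ∈ I, f i ⊆ s) (hfk : ∀ i ∈ I, k ≤ (f i).card) (h : ℓ * s.card.choose k < I.card) :
    ∃ T ⊆ s, T.card = k ∧ ℓ < (I.filter (fun i => T ⊆ f i)).card := by
  choose! g hg hgk using fun i hi => Finset.exists_subset_card_eq (hfk i hi)
  have hmaps : ∀ i ∈ I, g i ∈ s.powersetCard k := fun i hi =>
    Finset.mem_powersetCard.mpr ⟨(hg i hi).trans (hfs i hi), hgk i hi⟩
  obtain ⟨T, hT, hfib⟩ := Finset.exists_lt_card_fiber_of_mul_lt_card_of_maps_to hmaps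
    (by rwa [Finset.card_powersetCard, mul_comm])
  refine ⟨T, (Finset.mem_powersetCard.mp hT).1, (Finset.mem_powersetCard.mp hT).2,
    hfib.trans_le (Finset.card_le_card ?_)⟩
  intro i hi
  rw [Finset.mem_filter] at hi ⊢
  exact ⟨hi.1, hi.2 ▸ hg i hi.1⟩

namespace SimpleGraph

variable {V : Type*} {G : SimpleGraph V} {K : Set V}

namespace ComponentCompl

theorem connected_coeGraph (C : G.ComponentCompl K) : C.coeGraph.Connected := by
  refine (ConnectedComponent.connected_toSimpleGraph C).map
    ⟨fun v => ⟨v.1.1, v.1.2, v.2⟩, fun h => h⟩ ?_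
  rintro ⟨v, hvK, hv⟩
  exact ⟨⟨⟨v, hvK⟩, hv⟩, rfl⟩

def neighborSet (C : G.ComponentCompl K) : Set V :=
  {x | x ∈ K ∧ ∃ v ∈ C, G.Adj x v}

theorem neighborSet_subset (C : G.ComponentCompl K) : C.neighborSet ⊆ K := fun _ hx => hx.1

theorem not_connected_induce_compl_neighborSet {C D : G.ComponentCompl K} (hCD : C ≠ D) :
    ¬ (G.induce C.neighborSetᶜ).Connected := by
  intro hconn
  obtain ⟨x, hxC⟩ := C.nonempty
  obtain ⟨y, hyD⟩ := D.nonempty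
  have hN : ∀ {z}, z ∉ K → z ∈ C.neighborSetᶜ := fun hz hzN => hz hzN.1
  obtain ⟨p⟩ := hconn.preconnected ⟨x, hN (notMem_of_mem hxC)⟩ ⟨y, hN (notMem_of_mem hyD)⟩
  obtain ⟨d, -, hdC, hdnC⟩ := p.exists_boundary_dart {z | z.1 ∈ C} hxC
    fun hyC => Set.disjoint_left.mp (ComponentCompl.pairwise_disjoint hCD) hyC hyD
  have hdK : d.snd.1 ∉ K := fun hK => d.snd.2 ⟨hK, d.fst.1, hdC, d.adj.symm⟩
  exact hdnC (mem_of_adj _ _ hdC hdK d.adj)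

end ComponentCompl

theorem ThreeConnected.two_lt_ncard_neighborSet (h3 : G.ThreeConnected)
    {C D : G.ComponentCompl K} (hCD : C ≠ D) : 2 < C.neighborSet.ncard := by
  by_contra! hle
  exact ComponentCompl.not_connected_induce_compl_neighborSet hCD (h3.2 _ hle)

theorem connected_induce_singleton (x : V) : (G.induce {x}).Connected :=
  ⟨Preconnected.of_subsingleton⟩

theorem hasMinor_completeBipartiteGraph {α β : Type*} (a : α ↪ V) (ha : ∀ i, a i ∈ K)
    (C : β ↪ G.ComponentCompl K) (hadj : ∀ i j, ∃ v ∈ C j, G.Adj (a i) v) :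
    G.HasMinor (completeBipartiteGraph α β) := by
  refine ⟨Sum.elim (fun i => {a i}) (fun j => (C j : Set V)), ?_, ?_, ?_, ?_⟩
  · rintro (i | j)
    exacts [Set.singleton_nonempty _, (C j).nonempty]
  · rintro (i | j)
    exacts [connected_induce_singleton _, (C j).connected_coeGraph]
  · rintro (i | j) (i' | j') hne
    · simpa using fun h => hne (congrArg Sum.inl (a.injective h))
    · simpa using fun h => ComponentCompl.notMem_of_mem h (ha i)
    · simpa using fun h => ComponentCompl.notMem_of_mem h (ha i')
    · exact ComponentCompl.pairwise_disjoint fun h => hne (congrArg Sum.inr (C.injective h))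
  · rintro (i | j) (i' | j') hadj'
    · simp at hadj'
    · obtain ⟨v, hv, hav⟩ := hadj i j'
      exact ⟨a i, rfl, v, hv, hav⟩
    · obtain ⟨v, hv, hav⟩ := hadj i' j
      exact ⟨v, hv, a i', rfl, hav.symm⟩
    · simp at hadj'

end SimpleGraph

/-- If `G` is a finite 3-connected graph with no `K_{3,ℓ}` minor, then for every
`S ⊆ V(G)` the number of connected components of `G − S` is at most `max 1 (ℓ * (|S| choose 3))`. -/
theorem threeConnected_no_K3l_minor_bounded_separability {V : Type} [Fintype V] (ℓ : ℕ)
    (G : SimpleGraph V) (h3 : G.ThreeConnected)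
    (hminor : ¬ G.HasMinor (completeBipartiteGraph (Fin 3) (Fin ℓ))) (S : Set V) :
    Nat.card ((G.induce (Sᶜ : Set V)).ConnectedComponent) ≤ max 1 (ℓ * (S.ncard).choose 3) := by
  classical
  by_contra! hlt
  have : Fintype (G.ComponentCompl S) := Fintype.ofFinite _
  have : Nontrivial (G.ComponentCompl S) :=
    Finite.one_lt_card_iff_nontrivial.mp ((le_max_left _ _).trans_lt hlt)
  have hN : ∀ C : G.ComponentCompl S, 3 ≤ C.neighborSet.toFinset.card := fun C => by
    obtain ⟨D, hD⟩ := exists_ne C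
    rw [← Set.ncard_eq_toFinset_card']
    exact h3.two_lt_ncard_neighborSet hD.symm
  have hcard :
      ℓ * S.toFinset.card.choose 3 < (Finset.univ : Finset (G.ComponentCompl S)).card := by
    rw [← Set.ncard_eq_toFinset_card', Finset.card_univ, ← Nat.card_eq_fintype_card]
    exact (le_max_right _ _).trans_lt hlt
  obtain ⟨T, hTS, hT3, hTℓ⟩ := Finset.exists_card_eq_lt_card_filter_subset
    (fun C _ => Set.toFinset_subset_toFinset.mpr C.neighborSet_subset) (fun C _ => hN C) hcard
  obtain ⟨a⟩ := Function.Embedding.nonempty_of_card_le (α := Fin 3) (β := T) <| by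
    rw [Fintype.card_fin, Fintype.card_coe, hT3]
  obtain ⟨c⟩ := Function.Embedding.nonempty_of_card_le (α := Fin ℓ)
    (β := {C ∈ (Finset.univ : Finset (G.ComponentCompl S)) | T ⊆ C.neighborSet.toFinset}) <| by
    rw [Fintype.card_fin, Fintype.card_coe]; exact hTℓ.le
  refine hminor (hasMinor_completeBipartiteGraph (a.trans (.subtype _))
    (fun i => Set.mem_toFinset.mp (hTS (a i).2)) (c.trans (.subtype _)) fun i j => ?_)
  exact (Set.mem_toFinset.mp ((Finset.mem_filter.mp (c j).2).2 (a i).2)).2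
end

section
/- Let G be a finite graph and (T, β) a tree decomposition of G. Then there exists a tree decomposition (T', β') of G together with a partition of V(T') into two sets V_a (a-nodes) and V_b (b-nodes) such that: (1) every edge of T' joins an a-node and a b-node; (2) for every a-node t and all distinct neighbors u_1, u_2 of t in T', β'(t) = β'(u_1) ∩ β'(u_2); (3) for every b-node t and all distinct neighbors u_1, u_2 of t in T', β'(t) ∩ β'(u_1) ≠ β'(t) ∩ β'(u_2); (4) every node of T' of degree at most 1 is a b-node; and moreover every bag β'(t) is contained in some bag β(s) of the original decomposition. -/
/-!
Call two edges of the tree equivalent when they are joined by a chain of edges, consecutive ones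
sharing a node and having the same adhesion (the intersection of the two end bags); the classes
are the segments. Replacing every segment by a star, whose new centre carries the common
adhesion, gives the segmented decomposition. In a tree the path between two nodes lies in every
connected subgraph containing both, and segments are connected: hence the new graph is again a
tree, and the tree path between two nodes of a segment runs inside it, so their common bag vertices
lie in its adhesion. Two distinct segments at a node have distinct adhesions, since equal ones
would have been merged.
-/

open SimpleGraph

namespace SimpleGraph

variable {α β : Type*} {H H' : SimpleGraph α} {t u : α}

theorem IsAcyclic.eq_bypass_of_isPath [DecidableEq α] (hH : H.IsAcyclic) {p : H.Walk t u}
    (hp : p.IsPath) (q : H.Walk t u) : p = q.bypass :=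
  congrArg Subtype.val ((hH.subsingleton_path t u).elim ⟨p, hp⟩ ⟨q.bypass, q.bypass_isPath⟩)

theorem IsAcyclic.support_subset_of_isPath (hH : H.IsAcyclic) {p : H.Walk t u} (hp : p.IsPath)
    (q : H.Walk t u) : p.support ⊆ q.support := by
  classical
  exact hH.eq_bypass_of_isPath hp q ▸ q.support_bypass_subset_support

theorem IsAcyclic.edges_subset_of_isPath (hH : H.IsAcyclic) {p : H.Walk t u} (hp : p.IsPath)
    (q : H.Walk t u) : p.edges ⊆ q.edges := by
  classical
  exact hH.eq_bypass_of_isPath hp q ▸ q.edges_bypass_subset_edges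

theorem IsAcyclic.edges_subset_edgeSet_of_reachable (hH : H.IsAcyclic) (hle : H' ≤ H)
    (hr : H'.Reachable t u) {p : H.Walk t u} (hp : p.IsPath) : ∀ e ∈ p.edges, e ∈ H'.edgeSet := by
  obtain ⟨q⟩ := hr
  intro e he
  have he' := hH.edges_subset_of_isPath hp (q.mapLe hle) he
  rw [Walk.edges_mapLe_eq_edges] at he'
  exact q.edges_subset_edgeSet he'

section Labelling

variable (κ : H.edgeSet → β)

def labelSubgraph (s : Set β) : SimpleGraph α where
  Adj x y := ∃ h : H.Adj x y, κ ⟨s(x, y), h⟩ ∈ s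
  symm := ⟨fun x y ⟨h, hs⟩ => ⟨h.symm, by
    rwa [show (⟨s(y, x), h.symm⟩ : H.edgeSet) = ⟨s(x, y), h⟩ from Subtype.ext Sym2.eq_swap]⟩⟩
  loopless := ⟨fun _ ⟨h, _⟩ => h.ne rfl⟩

theorem labelSubgraph_le (s : Set β) : labelSubgraph κ s ≤ H := fun _ _ h => h.1

theorem labelSubgraph_mono {s s' : Set β} (h : s ⊆ s') : labelSubgraph κ s ≤ labelSubgraph κ s' :=
  fun _ _ ⟨hadj, hs⟩ => ⟨hadj, h hs⟩

theorem label_mem_of_mem_edgeSet {s : Set β} {e : H.edgeSet}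
    (he : (e : Sym2 α) ∈ (labelSubgraph κ s).edgeSet) : κ e ∈ s := by
  obtain ⟨e, he'⟩ := e
  induction e using Sym2.ind with
  | _ x y => exact he.2

theorem labelSubgraph_reachable_of_mem (e : H.edgeSet) (ht : t ∈ (e : Sym2 α))
    (hu : u ∈ (e : Sym2 α)) : (labelSubgraph κ {κ e}).Reachable t u := by
  obtain ⟨e, he⟩ := e
  induction e using Sym2.ind with
  | _ x y =>
    have hxy : (labelSubgraph κ {κ ⟨s(x, y), he⟩}).Adj x y := ⟨he, rfl⟩
    rcases Sym2.mem_iff.1 ht with rfl | rfl <;> rcases Sym2.mem_iff.1 hu with rfl | rfl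
    exacts [.rfl, hxy.reachable, hxy.symm.reachable, .rfl]

def IsIncident (t : α) (c : β) : Prop := ∃ e : H.edgeSet, κ e = c ∧ t ∈ (e : Sym2 α)

def incidenceGraph : SimpleGraph (α ⊕ β) where
  Adj
    | .inl t, .inr c => IsIncident κ t c
    | .inr c, .inl t => IsIncident κ t c
    | _, _ => False
  symm := ⟨by rintro (_ | _) (_ | _) h <;> exact h⟩
  loopless := ⟨by rintro (_ | _) h <;> exact h⟩

def HasConnectedFibers : Prop :=
  ∀ c t u, IsIncident κ t c → IsIncident κ u c → (labelSubgraph κ {c}).Reachable t u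

theorem connected_induce_incidenceGraph {s : Set α} {s' : Set (α ⊕ β)}
    (hs : (H.induce s).Connected) (hinl : ∀ t, .inl t ∈ s' ↔ t ∈ s)
    (hinr : ∀ c, .inr c ∈ s' → ∃ t ∈ s, IsIncident κ t c)
    (hedge : ∀ e : H.edgeSet, (∀ t ∈ (e : Sym2 α), t ∈ s) → .inr (κ e) ∈ s') :
    ((incidenceGraph κ).induce s').Connected := by
  set I := (incidenceGraph κ).induce s'
  let node (t : s) : s' := ⟨.inl t, (hinl t).2 t.2⟩
  have reach_of_adj : ∀ a b : s, (H.induce s).Adj a b → I.Reachable (node a) (node b) := by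
    rintro ⟨a, ha⟩ ⟨b, hb⟩ hab
    have hlabel := hedge ⟨s(a, b), hab⟩ fun x hx => by
      rcases Sym2.mem_iff.1 hx with rfl | rfl <;> assumption
    have hI : ∀ x : s, x.1 ∈ (s(a, b) : Sym2 α) →
        I.Adj (node x) ⟨.inr (κ ⟨s(a, b), hab⟩), hlabel⟩ := fun x hx => ⟨_, rfl, hx⟩
    exact (hI ⟨a, ha⟩ (Sym2.mem_mk_left a b)).reachable.trans
      (hI ⟨b, hb⟩ (Sym2.mem_mk_right a b)).symm.reachable
  have reach_node : ∀ a b : s, I.Reachable (node a) (node b) := fun a b => by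
    have hab := hs.preconnected a b
    rw [reachable_iff_reflTransGen] at hab ⊢
    exact hab.lift' node fun a b h => (reachable_iff_reflTransGen _ _).1 (reach_of_adj a b h)
  have reach_some_node : ∀ x : s', ∃ t : s, I.Reachable x (node t) := by
    rintro ⟨t | c, hx⟩
    · exact ⟨⟨t, (hinl t).1 hx⟩, .rfl⟩
    · obtain ⟨t, ht, hinc⟩ := hinr c hx
      exact ⟨⟨t, ht⟩, Adj.reachable (show (incidenceGraph κ).Adj (.inr c) (.inl t) from hinc)⟩
  obtain ⟨t₀⟩ := hs.nonempty
  refine (connected_iff_exists_forall_reachable I).2 ⟨node t₀, fun x => ?_⟩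
  obtain ⟨t, ht⟩ := reach_some_node x
  exact (reach_node t₀ t).trans ht.symm

variable {κ}

theorem HasConnectedFibers.label_eq_of_mem_edges (hκ : HasConnectedFibers κ) (hH : H.IsAcyclic)
    {c : β} (ht : IsIncident κ t c) (hu : IsIncident κ u c) {p : H.Walk t u} (hp : p.IsPath)
    {e : H.edgeSet} (he : (e : Sym2 α) ∈ p.edges) : κ e = c :=
  label_mem_of_mem_edgeSet κ
    (hH.edges_subset_edgeSet_of_reachable (labelSubgraph_le κ _) (hκ c t u ht hu) hp _ he)

theorem HasConnectedFibers.reachable_of_walk_avoiding (hκ : HasConnectedFibers κ) {c₀ : β}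
    (W : (incidenceGraph κ).Walk (.inl t) (.inl u)) (hW : .inr c₀ ∉ W.support) :
    (labelSubgraph κ {c₀}ᶜ).Reachable t u := by
  have : Nonempty α := ⟨t⟩
  -- consecutive vertices of `W` have anchors in a common fibre, which is not that of `c₀`
  let anchor : α ⊕ β → α := Sum.elim id fun c => Classical.epsilon (IsIncident κ · c)
  have reach_of_adj : ∀ {c : β} {a : α}, c ≠ c₀ → IsIncident κ a c →
      (labelSubgraph κ {c₀}ᶜ).Reachable a (anchor (.inr c)) := fun hc ha =>
    (hκ _ _ _ ha (Classical.epsilon_spec (p := (IsIncident κ · _)) ⟨_, ha⟩)).mono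
      (labelSubgraph_mono κ (Set.singleton_subset_iff.2 hc))
  suffices ∀ {x y} (W : (incidenceGraph κ).Walk x y), .inr c₀ ∉ W.support →
      (labelSubgraph κ {c₀}ᶜ).Reachable (anchor x) (anchor y) from this W hW
  intro x y W hW
  induction W with
  | nil => exact .rfl
  | @cons x y z h W ih =>
    rw [Walk.support_cons, List.mem_cons, not_or] at hW
    have hy : y ≠ .inr c₀ := fun h => hW.2 (h ▸ W.start_mem_support)
    refine Reachable.trans ?_ (ih hW.2)
    rcases x with a | c <;> rcases y with b | d
    exacts [h.elim, reach_of_adj (fun h => hy (congrArg _ h)) h,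
      (reach_of_adj (fun h => hW.1 (congrArg _ h.symm)) h).symm, h.elim]

theorem HasConnectedFibers.eq_of_reachable_avoiding (hκ : HasConnectedFibers κ)
    (hH : H.IsAcyclic) {c : β} (ht : IsIncident κ t c) (hu : IsIncident κ u c)
    (hr : (labelSubgraph κ {c}ᶜ).Reachable t u) : t = u := by
  classical
  -- otherwise the first edge of the tree path from `t` to `u` would have label `c` and not `c`
  by_contra hne
  obtain ⟨q⟩ := hr.mono (labelSubgraph_le κ _)
  obtain ⟨z, hz, p, hp⟩ := Walk.exists_eq_cons_of_ne hne q.bypass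
  have hpath := q.bypass_isPath
  rw [hp] at hpath
  have hfirst : s(t, z) ∈ (Walk.cons hz p).edges := List.mem_cons_self
  exact label_mem_of_mem_edgeSet κ (e := ⟨_, hz⟩)
    (hH.edges_subset_edgeSet_of_reachable (labelSubgraph_le κ _) hr hpath _ hfirst)
    (hκ.label_eq_of_mem_edges hH ht hu hpath hfirst)

theorem HasConnectedFibers.isAcyclic_incidenceGraph (hκ : HasConnectedFibers κ)
    (hH : H.IsAcyclic) : (incidenceGraph κ).IsAcyclic := by
  classical
  have not_isCycle_inr : ∀ c (W : (incidenceGraph κ).Walk (.inr c) (.inr c)), ¬ W.IsCycle := by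
    intro c W hW
    cases W with
    | nil => exact hW.not_nil Walk.Nil.nil
    | @cons _ y _ h p =>
      rcases y with t | _
      -- the cycle leaves `c` to `t` and returns from `u` avoiding `c`; then `u = t` repeats an edge
      · obtain ⟨hp, hnotmem⟩ := (Walk.cons_isCycle_iff p h).1 hW
        obtain ⟨y, h', q, hq⟩ := Walk.exists_eq_cons_of_ne Sum.inr_ne_inl p.reverse
        rcases y with u | _
        · have hrev := hp.reverse
          rw [hq, Walk.cons_isPath_iff] at hrev
          have hut := hκ.eq_of_reachable_avoiding hH h' h (hκ.reachable_of_walk_avoiding q hrev.2)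
          subst hut
          apply hnotmem
          rw [← List.mem_reverse, ← Walk.edges_reverse, hq]
          exact List.mem_cons_self
        · exact h'.elim
      · exact h.elim
  rintro (t | c) W hW
  · cases W with
    | nil => exact hW.not_nil Walk.Nil.nil
    | @cons _ y _ h p =>
      rcases y with _ | c
      · exact h.elim
      · exact not_isCycle_inr c _ (hW.rotate (List.mem_cons_of_mem _ p.start_mem_support))
  · exact not_isCycle_inr c W hW

theorem isTree_incidenceGraph (hH : H.IsTree) (hsurj : Function.Surjective κ)
    (hκ : HasConnectedFibers κ) : (incidenceGraph κ).IsTree := by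
  refine ⟨(induceUnivIso _).connected_iff.1 ?_, hκ.isAcyclic_incidenceGraph hH.isAcyclic⟩
  refine connected_induce_incidenceGraph κ ((induceUnivIso H).connected_iff.2 hH.connected)
    (fun _ => Iff.rfl) (fun c _ => ?_) fun _ _ => trivial
  obtain ⟨e, rfl⟩ := hsurj c
  exact ⟨_, trivial, e, rfl, Sym2.out_fst_mem _⟩

theorem two_le_ncard_neighborSet_inr [Finite α] [Finite β] (κ : H.edgeSet → β) (e : H.edgeSet) :
    2 ≤ ((incidenceGraph κ).neighborSet (.inr (κ e))).ncard := by
  classical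
  obtain ⟨e, he⟩ := e
  induction e using Sym2.ind with
  | _ x y =>
    have hsub : {.inl x, .inl y} ⊆ (incidenceGraph κ).neighborSet (.inr (κ ⟨s(x, y), he⟩)) := by
      rintro _ (rfl | rfl)
      exacts [⟨_, rfl, Sym2.mem_mk_left x y⟩, ⟨_, rfl, Sym2.mem_mk_right x y⟩]
    calc 2 = ({.inl x, .inl y} : Set (α ⊕ β)).ncard :=
          (Set.ncard_pair fun h => he.ne (Sum.inl_injective h)).symm
      _ ≤ _ := Set.ncard_le_ncard hsub

end Labelling

end SimpleGraph

namespace SimpleGraph.TreeDecomp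

variable {V : Type*} {G : SimpleGraph V} (td : G.TreeDecomp)

def adhesion (e : td.tree.edgeSet) : Set V := {v | ∀ t ∈ (e : Sym2 td.T), v ∈ td.bag t}

theorem adhesion_subset_bag {e : td.tree.edgeSet} {t : td.T} (ht : t ∈ (e : Sym2 td.T)) :
    td.adhesion e ⊆ td.bag t :=
  fun _ hv => hv t ht

theorem mem_bag_of_mem_support {v : V} {t u x : td.T} (ht : v ∈ td.bag t) (hu : v ∈ td.bag u)
    {p : td.tree.Walk t u} (hp : p.IsPath) (hx : x ∈ p.support) : v ∈ td.bag x := by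
  obtain ⟨q⟩ := td.bag_connected v ⟨t, ht⟩ ⟨u, hu⟩
  let q' := q.map (Embedding.induce {t | v ∈ td.bag t}).toHom
  have hq' : ∀ y ∈ q'.support, v ∈ td.bag y := by
    intro y hy
    rw [Walk.support_map, List.mem_map] at hy
    obtain ⟨y, -, rfl⟩ := hy
    exact y.2
  exact hq' x (td.isTree.isAcyclic.support_subset_of_isPath hp q' hx)

/-- The segments are the connected components of this graph. -/
def segmentGraph : SimpleGraph td.tree.edgeSet :=
  fromRel fun e f => td.adhesion e = td.adhesion f ∧ ∃ t, t ∈ (e : Sym2 td.T) ∧ t ∈ (f : Sym2 td.T)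

abbrev Segment : Type _ := td.segmentGraph.ConnectedComponent

def segment : td.tree.edgeSet → td.Segment := td.segmentGraph.connectedComponentMk

theorem segment_surjective : Function.Surjective td.segment :=
  Quot.mk_surjective

theorem adhesion_eq_of_reachable {e f : td.tree.edgeSet} (h : td.segmentGraph.Reachable e f) :
    td.adhesion e = td.adhesion f := by
  obtain ⟨W⟩ := h
  induction W with
  | nil => rfl
  | cons h _ ih => exact (((fromRel_adj _ _ _).1 h).2.elim (·.1) (·.1.symm)).trans ih

def segmentAdhesion : td.Segment → Set V :=
  ConnectedComponent.lift td.adhesion fun _ _ p _ => td.adhesion_eq_of_reachable ⟨p⟩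

@[simp]
theorem segmentAdhesion_segment (e : td.tree.edgeSet) :
    td.segmentAdhesion (td.segment e) = td.adhesion e :=
  rfl

theorem segmentAdhesion_subset_bag {t : td.T} {c : td.Segment} (h : IsIncident td.segment t c) :
    td.segmentAdhesion c ⊆ td.bag t := by
  obtain ⟨e, rfl, ht⟩ := h
  exact td.adhesion_subset_bag ht

theorem hasConnectedFibers_segment : HasConnectedFibers td.segment := by
  rintro c t u ⟨e, rfl, ht⟩ ⟨f, hf, hu⟩
  obtain ⟨W⟩ := ConnectedComponent.exact hf.symm
  clear hf
  induction W generalizing t with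
  | nil => exact labelSubgraph_reachable_of_mem _ _ ht hu
  | @cons e g f h W ih =>
    obtain ⟨hne, hshare⟩ := (fromRel_adj _ _ _).1 h
    obtain ⟨x, hxe, hxg⟩ : ∃ x, x ∈ (e : Sym2 td.T) ∧ x ∈ (g : Sym2 td.T) :=
      hshare.elim (·.2) fun ⟨_, x, hxg, hxe⟩ => ⟨x, hxe, hxg⟩
    have hseg : td.segment g = td.segment e := ConnectedComponent.sound h.reachable.symm
    refine (labelSubgraph_reachable_of_mem _ _ ht hxe).trans ?_
    rw [← hseg]
    exact ih _ hxg hu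

theorem segmentAdhesion_eq_inter {c : td.Segment} {t₁ t₂ : td.T}
    (h₁ : IsIncident td.segment t₁ c) (h₂ : IsIncident td.segment t₂ c) (hne : t₁ ≠ t₂) :
    td.segmentAdhesion c = td.bag t₁ ∩ td.bag t₂ := by
  classical
  refine (Set.subset_inter (td.segmentAdhesion_subset_bag h₁)
    (td.segmentAdhesion_subset_bag h₂)).antisymm ?_
  rintro v ⟨hv₁, hv₂⟩
  obtain ⟨q⟩ := td.isTree.connected.preconnected t₁ t₂
  obtain ⟨z, hz, p, hp⟩ := Walk.exists_eq_cons_of_ne hne q.bypass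
  have hpath := q.bypass_isPath
  rw [hp] at hpath
  rw [← td.hasConnectedFibers_segment.label_eq_of_mem_edges td.isTree.isAcyclic h₁ h₂ hpath
    (e := ⟨_, hz⟩) List.mem_cons_self, segmentAdhesion_segment]
  intro x hx
  rcases Sym2.mem_iff.1 hx with rfl | rfl
  · exact hv₁
  · exact td.mem_bag_of_mem_support hv₁ hv₂ hpath (List.mem_cons_of_mem _ p.start_mem_support)

theorem inter_segmentAdhesion_ne {t : td.T} {c₁ c₂ : td.Segment}
    (h₁ : IsIncident td.segment t c₁) (h₂ : IsIncident td.segment t c₂) (hne : c₁ ≠ c₂) :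
    td.bag t ∩ td.segmentAdhesion c₁ ≠ td.bag t ∩ td.segmentAdhesion c₂ := by
  obtain ⟨e₁, rfl, ht₁⟩ := h₁
  obtain ⟨e₂, rfl, ht₂⟩ := h₂
  rw [segmentAdhesion_segment, segmentAdhesion_segment,
    Set.inter_eq_right.2 (td.adhesion_subset_bag ht₁),
    Set.inter_eq_right.2 (td.adhesion_subset_bag ht₂)]
  intro hadh
  refine hne (ConnectedComponent.sound (Adj.reachable ?_))
  exact (fromRel_adj _ _ _).2 ⟨fun h => hne (h ▸ rfl), .inl ⟨hadh, t, ht₁, ht₂⟩⟩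

/-- The b-nodes are the old nodes, the a-nodes are the segments. -/
noncomputable def segmented : G.TreeDecomp where
  T := td.T ⊕ td.Segment
  finite := by
    have := td.finite
    infer_instance
  tree := incidenceGraph td.segment
  isTree := isTree_incidenceGraph td.isTree td.segment_surjective td.hasConnectedFibers_segment
  bag := Sum.elim td.bag td.segmentAdhesion
  bag_connected v := by
    refine connected_induce_incidenceGraph _ (td.bag_connected v) (fun _ => Iff.rfl)
      (fun c hv => ?_) fun e he t ht => he t ht
    obtain ⟨e, rfl⟩ := td.segment_surjective c
    exact ⟨_, hv _ (Sym2.out_fst_mem _), e, rfl, Sym2.out_fst_mem _⟩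
  bag_cover _ _ h :=
    let ⟨t, hv, hw⟩ := td.bag_cover h
    ⟨.inl t, hv, hw⟩

end SimpleGraph.TreeDecomp

theorem exists_segmented_treeDecomp_general {V : Type} (G : SimpleGraph V)
    (td : G.TreeDecomp) :
    ∃ (td' : G.TreeDecomp) (Va Vb : Set td'.T),
      Va ∪ Vb = Set.univ ∧ Disjoint Va Vb ∧
      (∀ ⦃t u⦄, td'.tree.Adj t u → (t ∈ Va ∧ u ∈ Vb) ∨ (t ∈ Vb ∧ u ∈ Va)) ∧
      (∀ t ∈ Va, ∀ u₁ u₂, td'.tree.Adj t u₁ → td'.tree.Adj t u₂ → u₁ ≠ u₂ →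
        td'.bag t = td'.bag u₁ ∩ td'.bag u₂) ∧
      (∀ t ∈ Vb, ∀ u₁ u₂, td'.tree.Adj t u₁ → td'.tree.Adj t u₂ → u₁ ≠ u₂ →
        td'.bag t ∩ td'.bag u₁ ≠ td'.bag t ∩ td'.bag u₂) ∧
      (∀ t, (td'.tree.neighborSet t).ncard ≤ 1 → t ∈ Vb) ∧
      (∀ t, ∃ s, td'.bag t ⊆ td.bag s) := by
  have := td.finite
  refine ⟨td.segmented, Set.range Sum.inr, Set.range Sum.inl, Set.range_inr_union_range_inl,
    Set.isCompl_range_inl_range_inr.disjoint.symm, ?_, ?_, ?_, ?_, ?_⟩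
  · rintro (t | c) (u | d) h
    exacts [h.elim, .inr ⟨⟨t, rfl⟩, ⟨d, rfl⟩⟩, .inl ⟨⟨c, rfl⟩, ⟨u, rfl⟩⟩, h.elim]
  · rintro _ ⟨c, rfl⟩ (t₁ | _) (t₂ | _) h₁ h₂ hne
    exacts [td.segmentAdhesion_eq_inter h₁ h₂ (hne ∘ congrArg _), h₂.elim, h₁.elim, h₁.elim]
  · rintro _ ⟨t, rfl⟩ (_ | c₁) (_ | c₂) h₁ h₂ hne
    exacts [h₁.elim, h₁.elim, h₂.elim, td.inter_segmentAdhesion_ne h₁ h₂ (hne ∘ congrArg _)]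
  · rintro (t | c) hleaf
    · exact ⟨t, rfl⟩
    · obtain ⟨e, rfl⟩ := td.segment_surjective c
      exact absurd (hleaf.trans_lt one_lt_two) (two_le_ncard_neighborSet_inr td.segment e).not_gt
  · rintro (t | c)
    · exact ⟨t, subset_rfl⟩
    · obtain ⟨e, rfl⟩ := td.segment_surjective c
      exact ⟨_, td.adhesion_subset_bag (Sym2.out_fst_mem _)⟩

/-- Every tree decomposition of a finite graph can be turned into a segmented one:
the nodes split into a-nodes `Va` and b-nodes `Vb` such that (1) every tree edge joins an
a-node and a b-node, (2) at a-nodes the bag equals the intersection of the bags of any two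
distinct neighbors, (3) at b-nodes distinct neighbors give distinct bag intersections,
(4) nodes of degree at most 1 are b-nodes; moreover every new bag is contained in an old bag. -/
theorem exists_segmented_treeDecomp {V : Type} [Fintype V] (G : SimpleGraph V)
    (td : G.TreeDecomp) :
    ∃ (td' : G.TreeDecomp) (Va Vb : Set td'.T),
      Va ∪ Vb = Set.univ ∧ Disjoint Va Vb ∧
      (∀ ⦃t u⦄, td'.tree.Adj t u → (t ∈ Va ∧ u ∈ Vb) ∨ (t ∈ Vb ∧ u ∈ Va)) ∧
      (∀ t ∈ Va, ∀ u₁ u₂, td'.tree.Adj t u₁ → td'.tree.Adj t u₂ → u₁ ≠ u₂ →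
        td'.bag t = td'.bag u₁ ∩ td'.bag u₂) ∧
      (∀ t ∈ Vb, ∀ u₁ u₂, td'.tree.Adj t u₁ → td'.tree.Adj t u₂ → u₁ ≠ u₂ →
        td'.bag t ∩ td'.bag u₁ ≠ td'.bag t ∩ td'.bag u₂) ∧
      (∀ t, (td'.tree.neighborSet t).ncard ≤ 1 → t ∈ Vb) ∧
      (∀ t, ∃ s, td'.bag t ⊆ td.bag s) :=
  exists_segmented_treeDecomp_general G td
end

section
/- Let k ∈ ℕ, let G be a finite graph, and let (T, β) be a tree decomposition of G in which every bag has size at most k + 1. If u and v are distinct vertices of G such that there exist k + 1 pairwise internally disjoint u–v paths in G, then there is a node t of T with u ∈ β(t) and v ∈ β(t). -/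
/-!
Suppose no bag contains both `u` and `v`. Walking along the tree from a bag of `u` to a bag
of `v`, we leave the subtree of bags containing `u` through some tree edge `t₁t₂`. Deleting
this edge splits the tree in two, and `β(t₁) ∩ β(t₂)` separates `u` (in a bag on the `t₁` side)
from `v` (in a bag on the `t₂` side). It contains neither `u` nor `v`, so it meets the `k + 1`
internally disjoint `u`–`v` paths in distinct vertices; together with `u` this puts `k + 2`
vertices into `β(t₁)`.
-/

open SimpleGraph

namespace SimpleGraph

variable {V : Type*} {G : SimpleGraph V}

lemma Reachable.deleteEdges_or {a b c : V} (h : G.Reachable a b) :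
    (G.deleteEdges {s(b, c)}).Reachable a b ∨ (G.deleteEdges {s(b, c)}).Reachable a c := by
  obtain ⟨w⟩ := h
  induction w with
  | nil => exact Or.inl .rfl
  | @cons x y z hxy _ ih =>
    by_cases he : s(x, y) = s(z, c)
    · rcases Sym2.eq_iff.mp he with ⟨rfl, -⟩ | ⟨rfl, -⟩
      · exact Or.inl .rfl
      · exact Or.inr .rfl
    · have hxy' : (G.deleteEdges {s(z, c)}).Adj x y := deleteEdges_adj.mpr ⟨hxy, he⟩
      exact ih.imp hxy'.reachable.trans hxy'.reachable.trans

lemma Walk.IsPath.exists_exit_edge {P : V → Prop} {a b : V} {w : G.Walk a b} (hw : w.IsPath)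
    (ha : P a) (hb : ¬ P b) :
    ∃ s₁ s₂, G.Adj s₁ s₂ ∧ P s₁ ∧ ¬ P s₂ ∧ (G.deleteEdges {s(s₁, s₂)}).Reachable s₂ b := by
  induction w with
  | nil => exact (hb ha).elim
  | @cons x y _ hxy p ih =>
    rw [Walk.cons_isPath_iff] at hw
    by_cases hy : P y
    · exact ih hw.1 hy hb
    · refine ⟨x, y, hxy, ha, hy, ⟨p.toDeleteEdges _ fun e he hex => ?_⟩⟩
      rw [Set.mem_singleton_iff] at hex
      exact hw.2 (p.fst_mem_support_of_mem_edges (hex ▸ he))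

lemma Connected.mem_of_isBridge {W : Type*} {H : SimpleGraph W} {U : Set W}
    (hU : (H.induce U).Connected) {s s' t₁ t₂ : W} (hs : s ∈ U) (hs' : s' ∈ U)
    (hbr : H.IsBridge s(t₁, t₂))
    (hst : (H.deleteEdges {s(t₁, t₂)}).Reachable s t₁)
    (hst' : (H.deleteEdges {s(t₁, t₂)}).Reachable s' t₂) :
    t₁ ∈ U ∧ t₂ ∈ U := by
  obtain ⟨w⟩ := hU.preconnected ⟨s, hs⟩ ⟨s', hs'⟩
  have hw : ∀ t ∈ (w.map (Embedding.induce U).toHom).support, t ∈ U := by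
    simp only [Walk.support_map, List.mem_map]
    rintro _ ⟨t, -, rfl⟩
    exact t.2
  have he := (w.map (Embedding.induce U).toHom).mem_edges_of_not_reachable_deleteEdges
    fun (h : (H.deleteEdges {s(t₁, t₂)}).Reachable s s') =>
      isBridge_iff.mp hbr (hst.symm.trans (h.trans hst'))
  exact ⟨hw _ (Walk.fst_mem_support_of_mem_edges _ he),
    hw _ (Walk.snd_mem_support_of_mem_edges _ he)⟩

lemma TreeDecomp.exists_mem_support_mem_bag_inter (td : G.TreeDecomp) {t₁ t₂ : td.T}
    (hadj : td.tree.Adj t₁ t₂) {a b : V} (w : G.Walk a b) {s s' : td.T}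
    (ha : a ∈ td.bag s) (hb : b ∈ td.bag s')
    (hst : (td.tree.deleteEdges {s(t₁, t₂)}).Reachable s t₁)
    (hst' : (td.tree.deleteEdges {s(t₁, t₂)}).Reachable s' t₂) :
    ∃ x ∈ w.support, x ∈ td.bag t₁ ∩ td.bag t₂ := by
  have hbr := isAcyclic_iff_forall_adj_isBridge.mp td.isTree.isAcyclic hadj
  induction w generalizing s with
  | nil =>
    exact ⟨_, Walk.start_mem_support _, (td.bag_connected _).mem_of_isBridge ha hb hbr hst hst'⟩
  | cons hxy p ih =>
    obtain ⟨t, hxt, hyt⟩ := td.bag_cover hxy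
    rcases (td.isTree.connected.preconnected t t₁).deleteEdges_or with ht | ht
    · obtain ⟨x, hx, hx'⟩ := ih hyt hb ht
      exact ⟨x, List.mem_cons_of_mem _ hx, hx'⟩
    · exact ⟨_, Walk.start_mem_support _,
        (td.bag_connected _).mem_of_isBridge ha hxt hbr hst ht⟩

end SimpleGraph

lemma InternallyDisjointPaths.le_ncard_of_separates {V : Type*} {G : SimpleGraph V} {u v : V}
    {m : ℕ} {S : Set V}
    (h : InternallyDisjointPaths G u v m) (hS : S.Finite) (hu : u ∉ S) (hv : v ∉ S)
    (hsep : ∀ w : G.Walk u v, ∃ x ∈ w.support, x ∈ S) : m ≤ S.ncard := by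
  obtain ⟨P, -, hdisj⟩ := h
  choose x hxP hxS using fun i => hsep (P i).1
  have hx : Function.Injective fun i => (⟨x i, hxS i⟩ : S) := by
    intro i j hij
    replace hij : x i = x j := congrArg Subtype.val hij
    by_contra hne
    rcases hdisj i j hne (x i) (hxP i) (hij ▸ hxP j) with h | h
    · exact hu (h ▸ hxS i)
    · exact hv (h ▸ hxS i)
  have := hS.to_subtype
  simpa using Nat.card_le_card_of_injective _ hx

theorem mem_common_bag_of_internallyDisjointPaths_general {V : Type} [Fintype V] (k : ℕ)
    (G : SimpleGraph V) (td : G.TreeDecomp) (hbag : ∀ t, (td.bag t).ncard ≤ k + 1)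
    (u v : V) (hpaths : InternallyDisjointPaths G u v (k + 1)) :
    ∃ t, u ∈ td.bag t ∧ v ∈ td.bag t := by
  by_contra hnc
  obtain ⟨⟨tu, htu⟩⟩ := (td.bag_connected u).nonempty
  obtain ⟨⟨tv, htv⟩⟩ := (td.bag_connected v).nonempty
  obtain ⟨p, hp⟩ := td.isTree.connected.exists_isPath tu tv
  obtain ⟨t₁, t₂, hadj, hu₁, hu₂, ht₂⟩ :=
    hp.exists_exit_edge (P := (u ∈ td.bag ·)) htu fun hu => hnc ⟨tv, hu, htv⟩
  have hv₁ : v ∉ td.bag t₁ := fun hv => hnc ⟨t₁, hu₁, hv⟩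
  have hsep := calc
    k + 1 ≤ (td.bag t₁ ∩ td.bag t₂).ncard :=
      hpaths.le_ncard_of_separates (Set.toFinite _) (hu₂ ·.2) (hv₁ ·.1) fun w =>
        td.exists_mem_support_mem_bag_inter hadj w hu₁ htv .rfl ht₂.symm
    _ < (td.bag t₁).ncard :=
      Set.ncard_lt_ncard ⟨Set.inter_subset_left, fun h => hu₂ (h hu₁).2⟩ (Set.toFinite _)
  exact (hbag t₁).not_gt hsep

/-- If `(T, β)` is a tree decomposition of `G` with all bags of size at most
`k + 1`, and `u ≠ v` are joined by `k + 1` pairwise internally disjoint paths in `G`, then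
`u` and `v` lie in a common bag. -/
theorem mem_common_bag_of_internallyDisjointPaths {V : Type} [Fintype V] (k : ℕ)
    (G : SimpleGraph V) (td : G.TreeDecomp) (hbag : ∀ t, (td.bag t).ncard ≤ k + 1)
    (u v : V) (huv : u ≠ v) (hpaths : InternallyDisjointPaths G u v (k + 1)) :
    ∃ t, u ∈ td.bag t ∧ v ∈ td.bag t :=
  mem_common_bag_of_internallyDisjointPaths_general k G td hbag u v hpaths
end

section
/- Let k ∈ ℕ and let G be a finite graph of tree width at most k. Let G' be the improved version of G with respect to k, i.e., the graph on V(G) whose edges are those of G together with an edge between every pair of distinct nonadjacent vertices of G joined by k + 1 pairwise internally disjoint paths in G. Then every tree decomposition of G of width at most k is also a tree decomposition of G'; in particular, the tree width of G' equals the tree width of G. -/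
open SimpleGraph

section Improved

variable {V : Type*}

lemma InternallyDisjointPaths.symm {G : SimpleGraph V} {u v : V} {m : ℕ}
    (h : InternallyDisjointPaths G u v m) : InternallyDisjointPaths G v u m := by
  obtain ⟨P, hinj, hdisj⟩ := h
  refine ⟨fun i => (P i).reverse, ?_, ?_⟩
  · intro i j hij
    apply hinj
    apply Subtype.ext
    have h1 : (P i).1.reverse = (P j).1.reverse := congrArg Subtype.val hij
    have h2 := congrArg SimpleGraph.Walk.reverse h1
    simpa [SimpleGraph.Walk.reverse_reverse] using h2
  · intro i j hij x hxi hxj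
    have hxi' : x ∈ (P i).1.support := by
      have : x ∈ (P i).1.reverse.support := hxi
      simpa [SimpleGraph.Walk.support_reverse] using this
    have hxj' : x ∈ (P j).1.support := by
      have : x ∈ (P j).1.reverse.support := hxj
      simpa [SimpleGraph.Walk.support_reverse] using this
    rcases hdisj i j hij x hxi' hxj' with h | h
    · exact Or.inr h
    · exact Or.inl h

/-- The improved version of `G` with respect to `k`: the graph on `V(G)` whose edges are those
of `G` together with an edge between every pair of distinct vertices joined by `k + 1` pairwise
internally disjoint paths in `G`. -/
def improvedGraph (G : SimpleGraph V) (k : ℕ) : SimpleGraph V where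
  Adj u v := G.Adj u v ∨ (u ≠ v ∧ InternallyDisjointPaths G u v (k + 1))
  symm := by
    constructor
    rintro u v (h | ⟨hne, h⟩)
    · exact Or.inl h.symm
    · exact Or.inr ⟨hne.symm, h.symm⟩
  loopless := by
    constructor
    rintro u (h | ⟨hne, _⟩)
    · exact G.irrefl h
    · exact hne rfl

/-- The tree width of `G`: the minimum width of a tree decomposition of `G`. -/
noncomputable def treewidth (G : SimpleGraph V) : ℕ :=
  sInf {k | G.HasTreeDecompWidthLE k}

end Improved

/-!
Suppose `v` and `w` are joined by `k + 1` internally disjoint paths but share no bag of a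
decomposition of width at most `k`. Walking in the tree from a bag of `w` to a bag of `v`, let
`s' s` be the edge where we first enter the subtree of `v`. Deleting it separates the tree, and
then `bag s ∩ bag s'` separates `v` from `w` in `G`; it avoids `v` and `w`, so it contains an
inner vertex of each path, i.e. at least `k + 1` vertices. Together with `v` this puts `k + 2`
vertices into `bag s`.
-/

namespace SimpleGraph

variable {V : Type*}

theorem Walk.exists_adj_mem_of_notMem_of_mem {G : SimpleGraph V} {S : Set V} {u v : V}
    (p : G.Walk u v) (hu : u ∉ S) (hv : v ∈ S) :
    ∃ x y, G.Adj x y ∧ y ∈ S ∧ ∃ q : G.Walk u x, ∀ z ∈ q.support, z ∉ S := by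
  induction p with
  | nil => exact absurd hv hu
  | @cons u m v h p ih =>
    by_cases hm : m ∈ S
    · exact ⟨u, m, h, hm, .nil, by simpa using hu⟩
    · obtain ⟨x, y, hxy, hy, q, hq⟩ := ih hm hv
      refine ⟨x, y, hxy, hy, .cons h q, ?_⟩
      simp only [Walk.support_cons, List.mem_cons, forall_eq_or_imp]
      exact ⟨hu, hq⟩

theorem InternallyDisjointPaths.le_ncard {G : SimpleGraph V} {u v : V} {m : ℕ}
    (hP : InternallyDisjointPaths G u v m) {S : Set V} (hS : S.Finite) (hu : u ∉ S)
    (hv : v ∉ S) (hsep : ∀ p : G.Path u v, ∃ z ∈ (p : G.Walk u v).support, z ∈ S) :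
    m ≤ S.ncard := by
  obtain ⟨P, -, hdisj⟩ := hP
  choose z hzP hzS using fun i => hsep (P i)
  have hz : Function.Injective z := by
    intro i j hij
    by_contra hne
    rcases hdisj i j hne (z i) (hzP i) (hij ▸ hzP j) with h | h
    · exact hu (h ▸ hzS i)
    · exact hv (h ▸ hzS i)
  simpa using Set.ncard_le_ncard_of_injOn z (s := Set.univ) (fun i _ => hzS i) hz.injOn hS

namespace TreeDecomp

variable {G H : SimpleGraph V} (td : G.TreeDecomp)

theorem mem_bag_of_not_reachable_deleteEdges {s s' t₁ t₂ : td.T} {x : V}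
    (hx₁ : x ∈ td.bag t₁) (hx₂ : x ∈ td.bag t₂)
    (h : ¬ (td.tree.deleteEdges {s(s, s')}).Reachable t₁ t₂) :
    x ∈ td.bag s ∧ x ∈ td.bag s' := by
  obtain ⟨p⟩ := (td.bag_connected x).preconnected ⟨t₁, hx₁⟩ ⟨t₂, hx₂⟩
  let q := p.map (Embedding.induce {t | x ∈ td.bag t}).toHom
  have he := q.mem_edges_of_not_reachable_deleteEdges h
  have hbag : ∀ t ∈ q.support, x ∈ td.bag t := by
    simp only [q, Walk.support_map, List.mem_map]
    rintro _ ⟨t, -, rfl⟩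
    exact t.2
  exact ⟨hbag s (q.fst_mem_support_of_mem_edges he),
    hbag s' (q.snd_mem_support_of_mem_edges he)⟩

theorem exists_mem_support_of_not_reachable_deleteEdges {s s' t₁ t₂ : td.T} {x y : V}
    (p : G.Walk x y) (hx : x ∈ td.bag t₁) (hy : y ∈ td.bag t₂)
    (h : ¬ (td.tree.deleteEdges {s(s, s')}).Reachable t₁ t₂) :
    ∃ z ∈ p.support, z ∈ td.bag s ∧ z ∈ td.bag s' := by
  induction p generalizing t₁ with
  | nil => exact ⟨_, by simp, td.mem_bag_of_not_reachable_deleteEdges hx hy h⟩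
  | cons hxm p ih =>
    obtain ⟨t, hxt, hmt⟩ := td.bag_cover hxm
    by_cases ht : (td.tree.deleteEdges {s(s, s')}).Reachable t₁ t
    · obtain ⟨z, hz, hzs⟩ := ih hmt hy fun htt₂ => h (ht.trans htt₂)
      exact ⟨z, by simp [hz], hzs⟩
    · exact ⟨_, by simp, td.mem_bag_of_not_reachable_deleteEdges hx hxt ht⟩

theorem exists_separating_edge {v w : V} (hvw : ∀ t, v ∈ td.bag t → w ∉ td.bag t) :
    ∃ s s' b, v ∈ td.bag s ∧ v ∉ td.bag s' ∧ w ∈ td.bag b ∧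
      ¬ (td.tree.deleteEdges {s(s, s')}).Reachable s b := by
  obtain ⟨⟨a, ha⟩⟩ := (td.bag_connected v).nonempty
  obtain ⟨⟨b, hb⟩⟩ := (td.bag_connected w).nonempty
  obtain ⟨p⟩ := td.isTree.connected b a
  obtain ⟨s', s, hs's, hs, q, hq⟩ :=
    p.exists_adj_mem_of_notMem_of_mem (S := {t | v ∈ td.bag t}) (fun hv => hvw b hv hb) ha
  have hss' : ¬ (td.tree.deleteEdges {s(s, s')}).Reachable s s' :=
    isBridge_iff.mp (isAcyclic_iff_forall_adj_isBridge.mp td.isTree.isAcyclic hs's.symm)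
  have hbs' : (td.tree.deleteEdges {s(s, s')}).Reachable b s' := by
    refine ⟨q.toDeleteEdges _ fun e he hes => ?_⟩
    rw [Set.mem_singleton_iff] at hes
    exact hq s (q.fst_mem_support_of_mem_edges (hes ▸ he)) hs
  exact ⟨s, s', b, hs, hq s' q.end_mem_support, hb, fun hsb => hss' (hsb.trans hbs')⟩

theorem exists_bag_of_improvedGraph_adj [Finite V] {k : ℕ}
    (hwd : ∀ t, (td.bag t).ncard ≤ k + 1) {v w : V} (hvw : (improvedGraph G k).Adj v w) :
    ∃ t, v ∈ td.bag t ∧ w ∈ td.bag t := by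
  rcases hvw with h | ⟨-, hpaths⟩
  · exact td.bag_cover h
  by_contra! hno
  obtain ⟨s, s', b, hvs, hvs', hwb, hsb⟩ := td.exists_separating_edge hno
  have hsep : k + 1 ≤ (td.bag s ∩ td.bag s').ncard :=
    hpaths.le_ncard (Set.toFinite _) (fun hv => hvs' hv.2) (fun hw => hno s hvs hw.1)
      fun p => td.exists_mem_support_of_not_reachable_deleteEdges p hvs hwb hsb
  have hlt : (td.bag s ∩ td.bag s').ncard < (td.bag s).ncard :=
    Set.ncard_lt_ncard ⟨Set.inter_subset_left, fun h => hvs' (h hvs).2⟩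
  have := hwd s
  omega

def ofBagCover (hH : ∀ ⦃v w : V⦄, H.Adj v w → ∃ t, v ∈ td.bag t ∧ w ∈ td.bag t) :
    H.TreeDecomp :=
  { td with bag_cover := hH }

end TreeDecomp

theorem HasTreeDecompWidthLE.anti {G H : SimpleGraph V} {k : ℕ} (hGH : G ≤ H)
    (h : H.HasTreeDecompWidthLE k) : G.HasTreeDecompWidthLE k :=
  let ⟨td, htd⟩ := h
  ⟨td.ofBagCover fun _ _ hvw => td.bag_cover (hGH hvw), htd⟩

end SimpleGraph

section Treewidth

variable {V : Type*} {G H : SimpleGraph V} {k : ℕ}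

theorem le_improvedGraph : G ≤ improvedGraph G k :=
  fun _ _ => Or.inl

theorem treewidth_le (h : G.HasTreeDecompWidthLE k) : treewidth G ≤ k :=
  Nat.sInf_le h

theorem hasTreeDecompWidthLE_treewidth (h : G.HasTreeDecompWidthLE k) :
    G.HasTreeDecompWidthLE (treewidth G) :=
  Nat.sInf_mem (s := {k | G.HasTreeDecompWidthLE k}) ⟨k, h⟩

theorem treewidth_mono (hGH : G ≤ H) (hH : H.HasTreeDecompWidthLE k) :
    treewidth G ≤ treewidth H :=
  treewidth_le ((hasTreeDecompWidthLE_treewidth hH).anti hGH)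

end Treewidth

/-- If `G` has tree width at most `k` and `G'` is the improved version of `G`
with respect to `k`, then every tree decomposition of `G` of width at most `k` is also a tree
decomposition of `G'` (i.e. it additionally covers all edges of `G'`); in particular
`tw(G') = tw(G)`. -/
theorem improvedGraph_treeDecomp_treewidth {V : Type} [Fintype V] (k : ℕ)
    (G : SimpleGraph V) (htw : G.HasTreeDecompWidthLE k) :
    (∀ td : G.TreeDecomp, (∀ t, (td.bag t).ncard ≤ k + 1) →
      ∀ ⦃v w : V⦄, (improvedGraph G k).Adj v w → ∃ t, v ∈ td.bag t ∧ w ∈ td.bag t) ∧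
    treewidth (improvedGraph G k) = treewidth G := by
  have hcover : ∀ td : G.TreeDecomp, (∀ t, (td.bag t).ncard ≤ k + 1) →
      ∀ ⦃v w : V⦄, (improvedGraph G k).Adj v w → ∃ t, v ∈ td.bag t ∧ w ∈ td.bag t :=
    fun td hwd _ _ => td.exists_bag_of_improvedGraph_adj hwd
  obtain ⟨td, htd⟩ := hasTreeDecompWidthLE_treewidth htw
  have hwd : ∀ t, (td.bag t).ncard ≤ k + 1 :=
    fun t => (htd t).trans (Nat.succ_le_succ (treewidth_le htw))
  have himp : (improvedGraph G k).HasTreeDecompWidthLE (treewidth G) :=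
    ⟨td.ofBagCover (hcover td hwd), htd⟩
  exact ⟨hcover, le_antisymm (treewidth_le himp) (treewidth_mono le_improvedGraph himp)⟩
end

section
/- Let k ∈ ℕ and let G be a finite graph of tree width at most k. Then G has a tree decomposition (T, β) such that (1) for every node t of T, the induced subgraph G[β(t)] is an atom, and (2) for every edge {t, u} of T, the set β(t) ∩ β(u) induces a clique in G; consequently the adhesion of (T, β) is at most k + 1. -/
open SimpleGraph

/-!
If `G` is not an atom, a clique separator `S` splits it into the two proper induced subgraphs
on `S ∪ C` and `V \ C`, where `C` is a component of `G - S`; they meet in the clique `S`.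
By induction both have tree decompositions into atoms with clique adhesions. Every clique of a
graph lies in some bag of each of its tree decompositions (pairwise intersecting subtrees of a
tree have a common node), so `S` lies in a bag on either side, and joining these two bags by a
new tree edge yields the decomposition of `G`. For the same reason each clique adhesion lies in
a bag of a decomposition of width `k`, so it has at most `k + 1` vertices.
-/

namespace SimpleGraph

section Trees

variable {α : Type*} {T : SimpleGraph α}

lemma Connected.exists_adj_forall_walk_notMem_support (hT : T.Connected) {X : Set α}
    (hX : (T.induce X).Connected) {t : α} (ht : t ∉ X) :
    ∃ u, T.Adj t u ∧ ∀ s ∈ X, ∃ w : T.Walk s u, t ∉ w.support := by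
  classical
  obtain ⟨⟨x, hx⟩⟩ := hX.nonempty
  have htx : t ≠ x := fun h => ht (h ▸ hx)
  let p := (hT.preconnected t x).some.toPath
  obtain ⟨u, hadj, q, hq⟩ := Walk.exists_eq_cons_of_ne htx p.1
  have hpath := p.2
  rw [hq, Walk.cons_isPath_iff] at hpath
  refine ⟨u, hadj, fun s hs => ?_⟩
  obtain ⟨r⟩ := hX ⟨s, hs⟩ ⟨x, hx⟩
  obtain ⟨r', hr'⟩ : ∃ r' : T.Walk s x, ∀ y ∈ r'.support, y ∈ X :=
    ⟨r.map ⟨Subtype.val, id⟩, fun y hy => by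
      rw [Walk.support_map] at hy
      obtain ⟨y, -, rfl⟩ := List.mem_map.1 hy
      exact y.2⟩
  refine ⟨r'.append q.reverse, ?_⟩
  rw [Walk.mem_support_append_iff, Walk.support_reverse, List.mem_reverse]
  rintro (h | h)
  · exact ht (hr' t h)
  · exact hpath.2 h

lemma IsAcyclic.mem_support_of_adj_of_notMem_support (hT : T.IsAcyclic) {s t u : α}
    (hadj : T.Adj t u) (p : T.Walk s u) (hp : t ∉ p.support) (q : T.Walk s t) :
    u ∈ q.support := by
  classical
  by_contra hq
  refine isBridge_iff.1 (isAcyclic_iff_forall_adj_isBridge.1 hT hadj)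
    ⟨(q.reverse.append p).toDeleteEdges {s(t, u)} ?_⟩
  rintro e he rfl
  rcases List.mem_append.1 (Walk.edges_append _ _ ▸ he) with h | h
  · rw [Walk.edges_reverse, List.mem_reverse] at h
    exact hq (q.snd_mem_support_of_mem_edges h)
  · exact hp (p.fst_mem_support_of_mem_edges h)

lemma IsTree.exists_apply_apply_eq [Finite α] (hT : T.IsTree) (f : α → α)
    (hf : ∀ t, T.Adj t (f t)) : ∃ t, f (f t) = t := by
  have hcard : Nat.card T.edgeSet < Nat.card α := by
    have := (isTree_iff_connected_and_card.1 hT).2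
    omega
  have hnotinj : ¬ Function.Injective (fun t => (⟨s(t, f t), hf t⟩ : T.edgeSet)) :=
    fun hinj => (Nat.card_le_card_of_injective _ hinj).not_gt hcard
  obtain ⟨t, u, heq, hne⟩ := Function.not_injective_iff.1 hnotinj
  rcases Sym2.eq_iff.1 (congrArg Subtype.val heq) with ⟨h, -⟩ | ⟨h, h'⟩
  · exact absurd h hne
  · exact ⟨t, by rw [h', ← h]⟩

end Trees

variable {V W : Type*} {G : SimpleGraph V}

lemma induce_image_connected {H : SimpleGraph W} (φ : G →g H) {s : Set V}
    (h : (G.induce s).Connected) : (H.induce (φ '' s)).Connected :=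
  h.map (induceHom φ (Set.mapsTo_image φ s)) (Set.surjective_mapsTo_image_restrict φ s)

lemma IsTree.sum_sup_edge {H : SimpleGraph W} [Finite V] [Finite W] (hG : G.IsTree)
    (hH : H.IsTree) (v : V) (w : W) : ((G ⊕g H) ⊔ edge (Sum.inl v) (Sum.inr w)).IsTree := by
  rw [isTree_iff_connected_and_card] at hG hH ⊢
  refine ⟨hG.1.sum_sup_edge hH.1, ?_⟩
  have hedges : ((G ⊕g H) ⊔ edge (Sum.inl v) (Sum.inr w)).edgeSet
      = insert s(Sum.inl v, Sum.inr w) (G ⊕g H).edgeSet := by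
    rw [edgeSet_sup, edgeSet_edge, Set.union_comm, Set.insert_eq]
    congr 1
    ext e
    simp only [Set.mem_sdiff, Set.mem_singleton_iff, Sym2.mem_diagSet, and_iff_left_iff_imp]
    rintro rfl
    simp
  have hnew : s(Sum.inl v, Sum.inr w) ∉ (G ⊕g H).edgeSet :=
    not_adj_sum_inl_inr (G := G) (H := H) v w
  rw [hedges, Nat.card_coe_set_eq, Set.ncard_insert_of_notMem hnew, ← Nat.card_coe_set_eq,
    Nat.card_congr edgeSetSumEquiv, Nat.card_sum, Nat.card_sum]
  omega

lemma IsAtomGraph.of_iso {H : SimpleGraph W} (e : G ≃g H) (h : H.IsAtomGraph) :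
    G.IsAtomGraph := by
  rintro S ⟨hS, v, w, hvw⟩
  have hmem : ∀ x, e x ∈ e '' S ↔ x ∈ S := fun x => e.injective.mem_set_image
  have hbij : Set.BijOn e Sᶜ (e '' S)ᶜ := by
    rw [← Set.image_compl_eq e.bijective]
    exact e.injective.injOn.bijOn_image
  refine h (e '' S)
    ⟨?_, ⟨e v, (hmem v).not.2 v.2⟩, ⟨e w, (hmem w).not.2 w.2⟩, fun hr => hvw ?_⟩
  · rintro _ ⟨x, hx, rfl⟩ _ ⟨y, hy, rfl⟩ hne
    exact e.map_adj_iff.2 (hS hx hy (ne_of_apply_ne e hne))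
  · convert hr.map (e.induce hbij).symm.toHom using 1 <;>
      exact ((e.induce hbij).symm_apply_apply _).symm

noncomputable def induceInduceIso (G : SimpleGraph V) (A : Set V) (s : Set A) :
    (G.induce A).induce s ≃g G.induce (Subtype.val '' s) where
  toEquiv := Equiv.Set.image Subtype.val s Subtype.val_injective
  map_rel_iff' := by simp [Equiv.Set.image, Equiv.Set.imageOfInjOn]

structure IsSeparation (G : SimpleGraph V) (A B : Set V) : Prop where
  union_eq_univ : A ∪ B = Set.univ
  adj_mem : ∀ ⦃x y⦄, G.Adj x y → x ∈ A ∧ y ∈ A ∨ x ∈ B ∧ y ∈ B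

theorem IsCliqueSeparator.exists_isSeparation {S : Set V} (h : G.IsCliqueSeparator S) :
    ∃ A B, G.IsSeparation A B ∧ G.IsClique (A ∩ B) ∧ A ≠ Set.univ ∧ B ≠ Set.univ := by
  obtain ⟨hS, v, w, hvw⟩ := h
  set C : Set V := Subtype.val '' {x | (G.induce Sᶜ).Reachable v x}
  have hC : ∀ ⦃x y⦄, x ∈ C → G.Adj x y → y ∈ S ∪ C := by
    rintro x y ⟨x, hx, rfl⟩ hadj
    by_cases hy : y ∈ S
    · exact Or.inl hy
    · exact Or.inr ⟨⟨y, hy⟩, hx.trans (Adj.reachable hadj), rfl⟩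
  refine ⟨S ∪ C, Cᶜ,
    ⟨by simp [Set.union_assoc], fun x y hadj => ?_⟩, hS.subset ?_, ?_, ?_⟩
  · by_cases hx : x ∈ C
    · exact Or.inl ⟨Or.inr hx, hC hx hadj⟩
    by_cases hy : y ∈ C
    · exact Or.inl ⟨hC hy hadj.symm, Or.inr hy⟩
    · exact Or.inr ⟨hx, hy⟩
  · rintro x ⟨hx | hx, hx'⟩
    exacts [hx, absurd hx hx']
  · refine Set.ne_univ_iff_exists_notMem _ |>.2 ⟨w, ?_⟩
    rintro (hw | ⟨w', hw', hww'⟩)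
    exacts [w.2 hw, hvw (Subtype.ext hww' ▸ hw')]
  · exact Set.ne_univ_iff_exists_notMem _ |>.2 ⟨v, fun hv => hv ⟨v, .refl v, rfl⟩⟩

namespace TreeDecomp

theorem exists_subset_bag_of_isClique (td : G.TreeDecomp) {K : Set V} (hK : G.IsClique K) :
    ∃ t, K ⊆ td.bag t := by
  by_contra! hcon
  simp only [Set.not_subset] at hcon
  choose v hvK hv using hcon
  have := td.finite
  -- Orient every node `t` towards the subtree of a vertex of `K` missing from its bag;
  -- some tree edge is then oriented both ways.
  choose f hadj hf using fun t =>
    td.isTree.connected.exists_adj_forall_walk_notMem_support (td.bag_connected (v t)) (hv t)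
  obtain ⟨t, ht⟩ := td.isTree.exists_apply_apply_eq f hadj
  obtain ⟨s, hs, hs'⟩ : ∃ s, v t ∈ td.bag s ∧ v (f t) ∈ td.bag s := by
    by_cases heq : v t = v (f t)
    · obtain ⟨⟨s, hs⟩⟩ := (td.bag_connected (v t)).nonempty
      exact ⟨s, hs, heq ▸ hs⟩
    · exact td.bag_cover (hK (hvK t) (hvK (f t)) heq)
  obtain ⟨p, hp⟩ := hf t s hs
  obtain ⟨q, hq⟩ := hf (f t) s hs'
  refine hq ?_
  simpa using td.isTree.isAcyclic.mem_support_of_adj_of_notMem_support (hadj t) p hp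
    (q.copy rfl ht)

def HasAtomBags (td : G.TreeDecomp) : Prop :=
  ∀ t, (G.induce (td.bag t)).IsAtomGraph

def HasCliqueAdhesions (td : G.TreeDecomp) : Prop :=
  ∀ ⦃t u⦄, td.tree.Adj t u → G.IsClique (td.bag t ∩ td.bag u)

def single (G : SimpleGraph V) : G.TreeDecomp where
  T := Unit
  finite := inferInstance
  tree := ⊥
  isTree := .of_subsingleton
  bag _ := Set.univ
  bag_connected _ := (connected_iff _).2 ⟨.of_subsingleton, ⟨⟨(), trivial⟩⟩⟩
  bag_cover _ _ _ := ⟨(), trivial, trivial⟩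

lemma HasAtomBags.single (hG : G.IsAtomGraph) : (TreeDecomp.single G).HasAtomBags :=
  fun _ => hG.of_iso (induceUnivIso G)

lemma HasCliqueAdhesions.single : (TreeDecomp.single G).HasCliqueAdhesions :=
  fun _ _ h => h.elim

variable {A B : Set V}

lemma connected_induce_mem_image_bag (td : (G.induce A).TreeDecomp) {x : V} (hx : x ∈ A) :
    (td.tree.induce {t | x ∈ Subtype.val '' td.bag t}).Connected := by
  have hset : {t | x ∈ Subtype.val '' td.bag t} = {t | ⟨x, hx⟩ ∈ td.bag t} := by
    ext t
    exact Subtype.val_injective.mem_set_image (a := ⟨x, hx⟩)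
  exact hset ▸ td.bag_connected ⟨x, hx⟩

lemma exists_subset_image_bag_of_isClique (td : (G.induce A).TreeDecomp) {K : Set V}
    (hKA : K ⊆ A) (hK : G.IsClique K) : ∃ t, K ⊆ Subtype.val '' td.bag t := by
  have hK' : (G.induce A).IsClique (Subtype.val ⁻¹' K) :=
    isClique_induce_iff.2 (hK.subset (Set.image_preimage_subset _ _))
  obtain ⟨t, ht⟩ := td.exists_subset_bag_of_isClique hK'
  refine ⟨t, ?_⟩
  calc K = Subtype.val '' (Subtype.val ⁻¹' K : Set A) := by
        rw [Subtype.image_preimage_coe, Set.inter_eq_right.2 hKA]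
    _ ⊆ Subtype.val '' td.bag t := Set.image_mono ht

variable (tdA : (G.induce A).TreeDecomp) (tdB : (G.induce B).TreeDecomp) (tA : tdA.T)
  (tB : tdB.T)

lemma connected_induce_sum_sup_edge (hA : A ∩ B ⊆ Subtype.val '' tdA.bag tA)
    (hB : A ∩ B ⊆ Subtype.val '' tdB.bag tB) {x : V} (hx : x ∈ A ∪ B) :
    (((tdA.tree ⊕g tdB.tree) ⊔ edge (Sum.inl tA) (Sum.inr tB)).induce
      {s | x ∈ Sum.elim (fun t => Subtype.val '' tdA.bag t)
        (fun t => Subtype.val '' tdB.bag t) s}).Connected := by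
  set XA := {t | x ∈ Subtype.val '' tdA.bag t}
  set XB := {t | x ∈ Subtype.val '' tdB.bag t}
  have hsplit : {s | x ∈ Sum.elim (fun t => Subtype.val '' tdA.bag t)
      (fun t => Subtype.val '' tdB.bag t) s} = Sum.inl '' XA ∪ Sum.inr '' XB := by
    ext (t | t) <;> simp [XA, XB]
  have hXA : x ∉ A → XA = ∅ := fun hxA =>
    Set.eq_empty_of_forall_notMem fun _ ⟨y, _, hy⟩ => hxA (hy ▸ y.2)
  have hXB : x ∉ B → XB = ∅ := fun hxB =>
    Set.eq_empty_of_forall_notMem fun _ ⟨y, _, hy⟩ => hxB (hy ▸ y.2)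
  set T := (tdA.tree ⊕g tdB.tree) ⊔ edge (Sum.inl tA) (Sum.inr tB)
  have hconnA (hxA : x ∈ A) : (T.induce (Sum.inl '' XA)).Connected :=
    induce_image_connected ((Hom.ofLE le_sup_left).comp Embedding.sumInl.toHom)
      (tdA.connected_induce_mem_image_bag hxA)
  have hconnB (hxB : x ∈ B) : (T.induce (Sum.inr '' XB)).Connected :=
    induce_image_connected ((Hom.ofLE le_sup_left).comp Embedding.sumInr.toHom)
      (tdB.connected_induce_mem_image_bag hxB)
  rw [hsplit]
  by_cases hxB : x ∈ B
  · by_cases hxA : x ∈ A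
    · exact connected_induce_union (hconnA hxA).preconnected (hconnB hxB).preconnected
        (Set.mem_image_of_mem _ (hA ⟨hxA, hxB⟩)) (Set.mem_image_of_mem _ (hB ⟨hxA, hxB⟩))
        (by simp [T, edge_adj])
    · rw [hXA hxA, Set.image_empty, Set.empty_union]
      exact hconnB hxB
  · rw [hXB hxB, Set.image_empty, Set.union_empty]
    exact hconnA (hx.resolve_right hxB)

variable {tdA tdB tA tB} (hAB : G.IsSeparation A B) (hA : A ∩ B ⊆ Subtype.val '' tdA.bag tA)
  (hB : A ∩ B ⊆ Subtype.val '' tdB.bag tB)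

def glue : G.TreeDecomp where
  T := tdA.T ⊕ tdB.T
  finite := have := tdA.finite; have := tdB.finite; inferInstance
  tree := (tdA.tree ⊕g tdB.tree) ⊔ edge (Sum.inl tA) (Sum.inr tB)
  isTree := have := tdA.finite; have := tdB.finite; tdA.isTree.sum_sup_edge tdB.isTree tA tB
  bag := Sum.elim (fun t => Subtype.val '' tdA.bag t) (fun t => Subtype.val '' tdB.bag t)
  bag_connected x :=
    connected_induce_sum_sup_edge tdA tdB tA tB hA hB (hAB.union_eq_univ ▸ Set.mem_univ x)
  bag_cover x y hxy := by
    rcases hAB.adj_mem hxy with ⟨hx, hy⟩ | ⟨hx, hy⟩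
    · obtain ⟨t, ht⟩ := tdA.bag_cover (show (G.induce A).Adj ⟨x, hx⟩ ⟨y, hy⟩ from hxy)
      exact ⟨.inl t, Set.mem_image_of_mem _ ht.1, Set.mem_image_of_mem _ ht.2⟩
    · obtain ⟨t, ht⟩ := tdB.bag_cover (show (G.induce B).Adj ⟨x, hx⟩ ⟨y, hy⟩ from hxy)
      exact ⟨.inr t, Set.mem_image_of_mem _ ht.1, Set.mem_image_of_mem _ ht.2⟩

lemma HasAtomBags.glue (hatA : tdA.HasAtomBags) (hatB : tdB.HasAtomBags) :
    (TreeDecomp.glue hAB hA hB).HasAtomBags := by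
  rintro (t | t)
  · exact (hatA t).of_iso (induceInduceIso G A _).symm
  · exact (hatB t).of_iso (induceInduceIso G B _).symm

lemma HasCliqueAdhesions.glue (hcl : G.IsClique (A ∩ B)) (hclA : tdA.HasCliqueAdhesions)
    (hclB : tdB.HasCliqueAdhesions) : (TreeDecomp.glue hAB hA hB).HasCliqueAdhesions := by
  have hsub {X : Set A} {Y : Set B} : Subtype.val '' X ∩ Subtype.val '' Y ⊆ A ∩ B :=
    Set.inter_subset_inter (Subtype.coe_image_subset _ _) (Subtype.coe_image_subset _ _)
  rintro (t | t) (u | u) htu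
  · change G.IsClique (Subtype.val '' _ ∩ Subtype.val '' _)
    rw [← Set.image_inter Subtype.val_injective]
    exact isClique_induce_iff.1 (hclA (by simpa [TreeDecomp.glue, edge_adj] using htu))
  · exact hcl.subset hsub
  · exact hcl.subset (Set.inter_comm _ _ ▸ hsub)
  · change G.IsClique (Subtype.val '' _ ∩ Subtype.val '' _)
    rw [← Set.image_inter Subtype.val_injective]
    exact isClique_induce_iff.1 (hclB (by simpa [TreeDecomp.glue, edge_adj] using htu))

end TreeDecomp

theorem exists_treeDecomp_hasAtomBags_hasCliqueAdhesions {V : Type*} [Finite V]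
    (G : SimpleGraph V) : ∃ td : G.TreeDecomp, td.HasAtomBags ∧ td.HasCliqueAdhesions := by
  induction hn : Nat.card V using Nat.strong_induction_on generalizing V with
  | _ n ih =>
    by_cases hG : G.IsAtomGraph
    · exact ⟨.single G, .single hG, .single⟩
    obtain ⟨S, hS⟩ : ∃ S, G.IsCliqueSeparator S := by simpa [IsAtomGraph] using hG
    obtain ⟨A, B, hAB, hcl, hA, hB⟩ := hS.exists_isSeparation
    have hcard {X : Set V} (hX : X ≠ Set.univ) : Nat.card X < n :=
      hn ▸ Nat.card_coe_set_eq X ▸ Set.ncard_lt_card hX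
    obtain ⟨tdA, hatA, hclA⟩ := ih _ (hcard hA) (G.induce A) rfl
    obtain ⟨tdB, hatB, hclB⟩ := ih _ (hcard hB) (G.induce B) rfl
    obtain ⟨tA, htA⟩ := tdA.exists_subset_image_bag_of_isClique Set.inter_subset_left hcl
    obtain ⟨tB, htB⟩ := tdB.exists_subset_image_bag_of_isClique Set.inter_subset_right hcl
    exact ⟨.glue hAB htA htB, .glue hAB htA htB hatA hatB,
      .glue hAB htA htB hcl hclA hclB⟩

end SimpleGraph

/-- Every finite graph of tree width at most `k` has a tree decomposition whose
bags induce atoms and whose adhesion sets (intersections of bags along tree edges) are cliques;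
consequently the adhesion is at most `k + 1`. -/
theorem exists_treeDecomp_atoms_clique_adhesion {V : Type} [Fintype V] (k : ℕ)
    (G : SimpleGraph V) (htw : G.HasTreeDecompWidthLE k) :
    ∃ td : G.TreeDecomp,
      (∀ t, (G.induce (td.bag t)).IsAtomGraph) ∧
      (∀ ⦃t u⦄, td.tree.Adj t u → G.IsClique (td.bag t ∩ td.bag u)) ∧
      (∀ ⦃t u⦄, td.tree.Adj t u → (td.bag t ∩ td.bag u).ncard ≤ k + 1) := by
  obtain ⟨td, hatoms, hcl⟩ := G.exists_treeDecomp_hasAtomBags_hasCliqueAdhesions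
  obtain ⟨td₀, hwidth⟩ := htw
  refine ⟨td, hatoms, hcl, fun t u htu => ?_⟩
  obtain ⟨s, hs⟩ := td₀.exists_subset_bag_of_isClique (hcl htu)
  exact (Set.ncard_le_ncard hs).trans (hwidth s)
end
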